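/- Consider a GWO stagnation process with horizon T ≥ 2, guiding positions p₁, p₂, p₃, center c = (p₁ + p₂ + p₃)/3, and step sizes a(t) = 2(1 - t/T), and assume that X(1) is uniformly distributed on a nondegenerate interval [α, β]. Set d₁ = max(|α - c|, |β - c|). Then for every natural number t with 2 ≤ t ≤ T, every real u with |u - c| < d₁·∏_{τ=1}^{t-1} a(τ) belongs to the topological support of the law of X(t). -/

import Mathlib

open MeasureTheory ProbabilityTheory Set

/-- The GWO step sizes `a(t) = 2 (1 - t/T)`. -/
noncomputable def gwoStep (T t : ℕ) : ℝ := 2 * (1 - (t : ℝ) / (T : ℝ))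

/-- A GWO stagnation process with horizon `T`, guiding positions
`p 0, p 1, p 2` and step sizes `a(t) = 2 (1 - t/T)`: random positions `X t`
and random coefficients `A t k ~ U[-a(t), a(t)]`, `C t k ~ U[0, 2]` such that
for each `t` the seven random variables `X t, A t k, C t k` are mutually
independent and the GWO update equation holds pointwise. -/
structure GWOStagnationProcess {Ω : Type*} [MeasurableSpace Ω] (P : Measure Ω)
    (T : ℕ) (p : Fin 3 → ℝ) where
  X : ℕ → Ω → ℝ
  A : ℕ → Fin 3 → Ω → ℝ
  C : ℕ → Fin 3 → Ω → ℝ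
  measX : ∀ t, Measurable (X t)
  measA : ∀ t k, Measurable (A t k)
  measC : ∀ t k, Measurable (C t k)
  lawA : ∀ t, 1 ≤ t → t ≤ T - 1 → ∀ k,
    Measure.map (A t k) P
      = (volume (Icc (-(gwoStep T t)) (gwoStep T t)))⁻¹ •
          volume.restrict (Icc (-(gwoStep T t)) (gwoStep T t))
  lawC : ∀ t, 1 ≤ t → t ≤ T - 1 → ∀ k,
    Measure.map (C t k) P
      = (volume (Icc (0:ℝ) 2))⁻¹ • volume.restrict (Icc (0:ℝ) 2)
  indep : ∀ t, 1 ≤ t → t ≤ T - 1 →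
    iIndepFun (m := fun _ : Fin 7 => (inferInstance : MeasurableSpace ℝ))
      ![X t, A t 0, A t 1, A t 2, C t 0, C t 1, C t 2] P
  update : ∀ t, 1 ≤ t → t ≤ T - 1 → ∀ ω,
    X (t + 1) ω
      = (1/3 : ℝ) * ∑ k : Fin 3, (p k + A t k ω * |C t k ω * p k - X t ω|)

/-!
With the coefficients frozen at `A_k = s`, `C_k = 1`, the update sends `x` to
`c + (s / 3) ∑ₖ |p_k - x|`, and `∑ₖ |p_k - x| ≥ 3 |x - c|` by the triangle inequality; as `s`
ranges over `(-a(t), a(t))`, the image of the single point `x` therefore covers the open ball of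
radius `a(t) |x - c|` about `c`. Since the update is continuous in its seven independent inputs,
the image of points of the input supports lies in the support of the output. Starting from the
endpoint of `[α, β]` farthest from `c`, each step multiplies the radius of the ball by `a(t)`.
-/

open Metric Topology

lemma Icc_subset_support_uniform {l r : ℝ} (hlr : l < r) :
    Icc l r ⊆ ((volume (Icc l r))⁻¹ • volume.restrict (Icc l r)).support := by
  have hnorm : (volume (Icc l r))⁻¹ ≠ 0 := by simp [Real.volume_Icc]
  refine Subset.trans ?_ (Measure.absolutelyContinuous_smul hnorm).support_mono
  have hIoo : Ioo l r ⊆ (volume.restrict (Icc l r)).support := fun x hx ↦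
    Measure.interior_inter_support
      ⟨interior_Icc (a := l) ▸ hx, by simp [Measure.support_eq_univ]⟩
  have hclosure := Measure.isClosed_support.closure_subset_iff.mpr hIoo
  rwa [closure_Ioo hlr.ne] at hclosure

lemma mem_support_map_of_iIndepFun {Ω ι β γ : Type*} [MeasurableSpace Ω] {P : Measure Ω}
    [TopologicalSpace β] [MeasurableSpace β] [OpensMeasurableSpace β]
    [TopologicalSpace γ] [MeasurableSpace γ]
    {F : ι → Ω → β} (hF : iIndepFun F P) (hFm : ∀ i, Measurable (F i))
    {g : (ι → β) → γ} (hgF : Measurable fun ω ↦ g fun i ↦ F i ω) {v : ι → β}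
    (hg : ContinuousAt g v) (hv : ∀ i, v i ∈ (P.map (F i)).support) :
    g v ∈ (P.map fun ω ↦ g fun i ↦ F i ω).support := by
  rw [Measure.mem_support_iff_forall]
  intro U hU
  have hU' : g ⁻¹' U ∈ Filter.pi fun i ↦ 𝓝 (v i) := by rw [← nhds_pi]; exact hg hU
  obtain ⟨I, t, ht, hIt⟩ := Filter.mem_pi'.mp hU'
  have hpos (i : ι) : 0 < P (F i ⁻¹' interior (t i)) := by
    rw [← Measure.map_apply (hFm i) isOpen_interior.measurableSet]
    exact (Measure.mem_support_iff_forall _).mp (hv i) _ (interior_mem_nhds.mpr (ht i))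
  calc 0 < ∏ i ∈ I, P (F i ⁻¹' interior (t i)) :=
        CanonicallyOrderedAdd.prod_pos.mpr fun i _ ↦ hpos i
    _ = P (⋂ i ∈ I, F i ⁻¹' interior (t i)) :=
        (hF.measure_inter_preimage_eq_mul I fun i _ ↦ isOpen_interior.measurableSet).symm
    _ ≤ P ((fun ω ↦ g fun i ↦ F i ω) ⁻¹' U) :=
        measure_mono fun ω hω ↦
          mem_preimage.mpr (hIt fun i hi ↦ interior_subset (mem_iInter₂.mp hω i hi))
    _ ≤ _ := Measure.le_map_apply hgF.aemeasurable U

lemma gwoStep_pos {T t : ℕ} (h : t < T) : 0 < gwoStep T t := by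
  have hT : (0 : ℝ) < T := by exact_mod_cast (Nat.zero_le t).trans_lt h
  have : (t : ℝ) / T < 1 := (div_lt_one hT).mpr (by exact_mod_cast h)
  unfold gwoStep
  linarith

/-- The right-hand side of the GWO update as a function of `![x, A₀, A₁, A₂, C₀, C₁, C₂]`. -/
noncomputable def gwoUpdate (p : Fin 3 → ℝ) (v : Fin 7 → ℝ) : ℝ :=
  (1 / 3 : ℝ) * ((p 0 + v 1 * |v 4 * p 0 - v 0|) + (p 1 + v 2 * |v 5 * p 1 - v 0|)
    + (p 2 + v 3 * |v 6 * p 2 - v 0|))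

lemma continuous_gwoUpdate (p : Fin 3 → ℝ) : Continuous (gwoUpdate p) := by
  unfold gwoUpdate
  fun_prop

lemma gwoUpdate_stagnant (p : Fin 3 → ℝ) (x s : ℝ) :
    gwoUpdate p ![x, s, s, s, 1, 1, 1]
      = (p 0 + p 1 + p 2) / 3 + s / 3 * (|p 0 - x| + |p 1 - x| + |p 2 - x|) := by
  simp only [gwoUpdate, Matrix.cons_val, one_mul]
  ring

lemma three_mul_abs_sub_centroid_le (p : Fin 3 → ℝ) (x : ℝ) :
    3 * |x - (p 0 + p 1 + p 2) / 3| ≤ |p 0 - x| + |p 1 - x| + |p 2 - x| :=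
  calc 3 * |x - (p 0 + p 1 + p 2) / 3| = |(p 0 - x) + (p 1 - x) + (p 2 - x)| := by
        rw [abs_sub_comm, ← abs_of_pos (three_pos : (0 : ℝ) < 3), ← abs_mul]
        ring_nf
    _ ≤ |p 0 - x| + |p 1 - x| + |p 2 - x| := abs_add_three _ _ _

lemma exists_gwoUpdate_stagnant_eq (p : Fin 3 → ℝ) {a x u : ℝ}
    (hu : |u - (p 0 + p 1 + p 2) / 3| < a * |x - (p 0 + p 1 + p 2) / 3|) :
    ∃ s, |s| < a ∧ gwoUpdate p ![x, s, s, s, 1, 1, 1] = u := by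
  set c := (p 0 + p 1 + p 2) / 3
  set W := |p 0 - x| + |p 1 - x| + |p 2 - x|
  have hW : 3 * |x - c| ≤ W := three_mul_abs_sub_centroid_le p x
  obtain ⟨ha, hxc⟩ : 0 < a ∧ 0 < |x - c| :=
    (pos_and_pos_or_neg_and_neg_of_mul_pos ((abs_nonneg _).trans_lt hu)).resolve_right
      fun h ↦ (abs_nonneg _).not_gt h.2
  have hWpos : 0 < W := by linarith
  refine ⟨3 * (u - c) / W, ?_, ?_⟩
  · rw [abs_div, abs_mul, abs_of_pos hWpos, abs_of_pos three_pos, div_lt_iff₀ hWpos]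
    nlinarith
  · rw [gwoUpdate_stagnant]
    field_simp
    ring

namespace GWOStagnationProcess

variable {Ω : Type*} [MeasurableSpace Ω] {P : Measure Ω} {T : ℕ} {p : Fin 3 → ℝ}
  (proc : GWOStagnationProcess P T p)

lemma X_succ_eq_gwoUpdate {t : ℕ} (ht1 : 1 ≤ t) (ht2 : t ≤ T - 1) :
    proc.X (t + 1) = fun ω ↦ gwoUpdate p fun i ↦
      ![proc.X t, proc.A t 0, proc.A t 1, proc.A t 2, proc.C t 0, proc.C t 1, proc.C t 2] i ω := by
  ext ω
  simp [proc.update t ht1 ht2 ω, Fin.sum_univ_three, gwoUpdate]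

lemma ball_subset_support_map_X_succ {t : ℕ} (ht1 : 1 ≤ t) (ht2 : t ≤ T - 1) {x : ℝ}
    (hx : x ∈ (P.map (proc.X t)).support) :
    ball ((p 0 + p 1 + p 2) / 3) (gwoStep T t * |x - (p 0 + p 1 + p 2) / 3|)
      ⊆ (P.map (proc.X (t + 1))).support := by
  intro u hu
  rw [mem_ball, Real.dist_eq] at hu
  obtain ⟨s, hs, rfl⟩ := exists_gwoUpdate_stagnant_eq p hu
  have hA (k : Fin 3) : s ∈ (P.map (proc.A t k)).support := by
    rw [proc.lawA t ht1 ht2 k]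
    exact Icc_subset_support_uniform (by linarith [abs_nonneg s]) (abs_le.mp hs.le)
  have hC (k : Fin 3) : 1 ∈ (P.map (proc.C t k)).support := by
    rw [proc.lawC t ht1 ht2 k]
    exact Icc_subset_support_uniform two_pos ⟨zero_le_one, one_le_two⟩
  rw [proc.X_succ_eq_gwoUpdate ht1 ht2]
  refine mem_support_map_of_iIndepFun (proc.indep t ht1 ht2) ?_
    (proc.X_succ_eq_gwoUpdate ht1 ht2 ▸ proc.measX (t + 1))
    (continuous_gwoUpdate p).continuousAt ?_
  · intro i
    fin_cases i <;> simp [proc.measX, proc.measA, proc.measC]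
  · intro i
    fin_cases i
    exacts [hx, hA 0, hA 1, hA 2, hC 0, hC 1, hC 2]

lemma ball_mul_subset_support_map_X_succ {t : ℕ} (ht1 : 1 ≤ t) (ht2 : t ≤ T - 1) {r : ℝ}
    (hr : ball ((p 0 + p 1 + p 2) / 3) r ⊆ (P.map (proc.X t)).support) :
    ball ((p 0 + p 1 + p 2) / 3) (r * gwoStep T t) ⊆ (P.map (proc.X (t + 1))).support := by
  set c := (p 0 + p 1 + p 2) / 3
  intro u hu
  have ha : 0 < gwoStep T t := gwoStep_pos (by omega)
  rw [mem_ball, Real.dist_eq, ← div_lt_iff₀ ha] at hu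
  obtain ⟨m, hum, hmr⟩ := exists_between hu
  have hm : 0 < m := (div_nonneg (abs_nonneg _) ha.le).trans_lt hum
  have hcm : |c + m - c| = m := by rw [add_sub_cancel_left, abs_of_pos hm]
  refine proc.ball_subset_support_map_X_succ ht1 ht2 (x := c + m) (hr ?_) ?_
  · rwa [mem_ball, Real.dist_eq, hcm]
  · rwa [mem_ball, Real.dist_eq, hcm, mul_comm, ← div_lt_iff₀ ha]

lemma ball_subset_support_map_X {e : ℝ} (he : e ∈ (P.map (proc.X 1)).support)
    {t : ℕ} (ht : 2 ≤ t) (hT : t ≤ T) :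
    ball ((p 0 + p 1 + p 2) / 3)
        (|e - (p 0 + p 1 + p 2) / 3| * ∏ τ ∈ Finset.Icc 1 (t - 1), gwoStep T τ)
      ⊆ (P.map (proc.X t)).support := by
  induction t, ht using Nat.le_induction with
  | base => simpa [mul_comm] using proc.ball_subset_support_map_X_succ le_rfl (by omega) he
  | succ t ht ih =>
    obtain ⟨s, rfl⟩ : ∃ s, t = s + 1 := ⟨t - 1, by omega⟩
    rw [Nat.add_sub_cancel, Finset.prod_Icc_succ_top (by omega), ← mul_assoc]
    exact proc.ball_mul_subset_support_map_X_succ (by omega) (by omega) (ih (by omega))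

end GWOStagnationProcess

theorem gwo_support_growth
    {Ω : Type*} [MeasurableSpace Ω] (P : Measure Ω)
    (T : ℕ) (p : Fin 3 → ℝ)
    (proc : GWOStagnationProcess P T p)
    (c : ℝ) (hc : c = (p 0 + p 1 + p 2) / 3)
    (α β : ℝ) (hαβ : α < β)
    (hinit : Measure.map (proc.X 1) P
      = (volume (Icc α β))⁻¹ • volume.restrict (Icc α β))
    (d₁ : ℝ) (hd₁ : d₁ = max |α - c| |β - c|) :
    ∀ t : ℕ, 2 ≤ t → t ≤ T →
      ∀ u : ℝ, |u - c| < d₁ * ∏ τ ∈ Finset.Icc 1 (t - 1), gwoStep T τ →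
        ∀ ε : ℝ, 0 < ε → 0 < Measure.map (proc.X t) P (Metric.ball u ε) := by
  intro t ht hT u hu
  obtain ⟨e, he, hed⟩ : ∃ e ∈ Icc α β, |e - c| = d₁ := by
    rcases le_total |α - c| |β - c| with h | h
    · exact ⟨β, ⟨hαβ.le, le_rfl⟩, by rw [hd₁, max_eq_right h]⟩
    · exact ⟨α, ⟨le_rfl, hαβ.le⟩, by rw [hd₁, max_eq_left h]⟩
  have he_supp : e ∈ (P.map (proc.X 1)).support := hinit ▸ Icc_subset_support_uniform hαβ he
  subst hc
  have hu_supp : u ∈ (P.map (proc.X t)).support :=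
    proc.ball_subset_support_map_X he_supp ht hT (by rwa [mem_ball, Real.dist_eq, hed])
  exact nhds_basis_ball.mem_measureSupport.mp hu_supp
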